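/- Let A be a bounded linear operator on a complex Hilbert space H, K a nonempty set of unit vectors, ber(T)=sup_{k∈K}|⟨T k,k⟩|, ‖T‖_ber = sup_{k,l∈K}|⟨T k,l⟩|. Then ‖Re(A)‖_ber² ≤ ber((A*A + AA*)/2), where Re(A) = (A + A*)/2. -/

import Mathlib

open ContinuousLinearMap

noncomputable def berNum {H : Type*} [NormedAddCommGroup H] [InnerProductSpace ℂ H]
    (K : Set H) (T : H →L[ℂ] H) : ℝ :=
  sSup {x : ℝ | ∃ k ∈ K, x = ‖(inner ℂ (T k) k : ℂ)‖}

noncomputable def berNorm {H : Type*} [NormedAddCommGroup H] [InnerProductSpace ℂ H]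
    (K : Set H) (T : H →L[ℂ] H) : ℝ :=
  sSup {x : ℝ | ∃ k ∈ K, ∃ l ∈ K, x = ‖(inner ℂ (T k) l : ℂ)‖}

/-!
Write `R = (A + A†)/2` and `J = (A - A†)/2`. Then `(A†A + AA†)/2 = R†R + J†J`, so for every `k`,
`⟪((A†A + AA†)/2) k, k⟫ = ‖R k‖² + ‖J k‖² ≥ ‖R k‖²`. For unit vectors `k, l` Cauchy–Schwarz gives
`|⟪R k, l⟫| ≤ ‖R k‖ ≤ √ber((A†A + AA†)/2)`, and taking the supremum over `k, l` proves the claim.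
-/

section Berezin

variable {H : Type*} [NormedAddCommGroup H] [InnerProductSpace ℂ H]

theorem berNum_nonneg (K : Set H) (T : H →L[ℂ] H) : 0 ≤ berNum K T :=
  Real.sSup_nonneg <| by rintro _ ⟨k, -, rfl⟩; exact norm_nonneg _

theorem berNorm_nonneg (K : Set H) (T : H →L[ℂ] H) : 0 ≤ berNorm K T :=
  Real.sSup_nonneg <| by rintro _ ⟨k, -, l, -, rfl⟩; exact norm_nonneg _

theorem norm_inner_self_le_berNum {K : Set H} (hK : ∀ k ∈ K, ‖k‖ ≤ 1) (T : H →L[ℂ] H)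
    {k : H} (hk : k ∈ K) : ‖(inner ℂ (T k) k : ℂ)‖ ≤ berNum K T := by
  refine le_csSup ⟨‖T‖, ?_⟩ ⟨k, hk, rfl⟩
  rintro _ ⟨k, hk, rfl⟩
  calc ‖(inner ℂ (T k) k : ℂ)‖ ≤ ‖T k‖ * ‖k‖ := norm_inner_le_norm _ _
    _ ≤ ‖T‖ * 1 * 1 := by
      gcongr
      · exact (le_opNorm T k).trans (mul_le_mul_of_nonneg_left (hK k hk) (norm_nonneg T))
      · exact hK k hk
    _ = ‖T‖ := by ring

theorem berNorm_le {K : Set H} {T : H →L[ℂ] H} {c : ℝ} (hc : 0 ≤ c)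
    (h : ∀ k ∈ K, ∀ l ∈ K, ‖(inner ℂ (T k) l : ℂ)‖ ≤ c) : berNorm K T ≤ c :=
  Real.sSup_le (by rintro _ ⟨k, hk, l, hl, rfl⟩; exact h k hk l hl) hc

end Berezin

section Adjoint

variable {H : Type*} [NormedAddCommGroup H] [InnerProductSpace ℂ H] [CompleteSpace H]

theorem inner_adjoint_mul_self_apply (S : H →L[ℂ] H) (x : H) :
    (inner ℂ ((adjoint S * S) x) x : ℂ) = (‖S x‖ ^ 2 : ℝ) := by
  rw [mul_apply_eq_comp, adjoint_inner_left, inner_self_eq_norm_sq_to_K]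
  norm_cast

theorem half_adjoint_mul_self_add_mul_adjoint (A : H →L[ℂ] H) :
    (2 : ℂ)⁻¹ • (adjoint A * A + A * adjoint A) =
      adjoint ((2 : ℂ)⁻¹ • (A + adjoint A)) * ((2 : ℂ)⁻¹ • (A + adjoint A)) +
        adjoint ((2 : ℂ)⁻¹ • (A - adjoint A)) * ((2 : ℂ)⁻¹ • (A - adjoint A)) := by
  simp only [← star_eq_adjoint, star_smul, star_add, star_sub, star_star, star_inv₀,
    star_ofNat, smul_mul_assoc, mul_smul_comm, smul_smul, mul_add, add_mul, mul_sub, sub_mul,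
    smul_add, smul_sub]
  module

theorem sq_norm_re_apply_le (A : H →L[ℂ] H) (k : H) :
    ‖((2 : ℂ)⁻¹ • (A + adjoint A)) k‖ ^ 2 ≤
      ‖(inner ℂ (((2 : ℂ)⁻¹ • (adjoint A * A + A * adjoint A)) k) k : ℂ)‖ := by
  rw [half_adjoint_mul_self_add_mul_adjoint, add_apply, inner_add_left,
    inner_adjoint_mul_self_apply, inner_adjoint_mul_self_apply, ← Complex.ofReal_add,
    Complex.norm_real, Real.norm_of_nonneg (by positivity)]
  exact le_add_of_nonneg_right (sq_nonneg _)

end Adjoint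

theorem berNorm_re_sq_general {H : Type*} [NormedAddCommGroup H] [InnerProductSpace ℂ H] [CompleteSpace H]
    (A : H →L[ℂ] H) (K : Set H) (hK1 : ∀ k ∈ K, ‖k‖ = 1) :
    (berNorm K ((2 : ℂ)⁻¹ • (A + adjoint A))) ^ 2
      ≤ berNum K ((2 : ℂ)⁻¹ • (adjoint A * A + A * adjoint A)) := by
  set R := (2 : ℂ)⁻¹ • (A + adjoint A)
  set T := (2 : ℂ)⁻¹ • (adjoint A * A + A * adjoint A)
  have hK : ∀ k ∈ K, ‖k‖ ≤ 1 := fun k hk ↦ (hK1 k hk).le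
  have hR : ∀ k ∈ K, ‖R k‖ ≤ √(berNum K T) := fun k hk ↦
    Real.le_sqrt_of_sq_le <| (sq_norm_re_apply_le A k).trans (norm_inner_self_le_berNum hK T hk)
  have hbound : berNorm K R ≤ √(berNum K T) := by
    refine berNorm_le (Real.sqrt_nonneg _) fun k hk l hl ↦ ?_
    calc ‖(inner ℂ (R k) l : ℂ)‖ ≤ ‖R k‖ * ‖l‖ := norm_inner_le_norm _ _
      _ = ‖R k‖ := by rw [hK1 l hl, mul_one]
      _ ≤ √(berNum K T) := hR k hk
  calc berNorm K R ^ 2 ≤ √(berNum K T) ^ 2 := pow_le_pow_left₀ (berNorm_nonneg K R) hbound 2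
    _ = berNum K T := Real.sq_sqrt (berNum_nonneg K T)

theorem berNorm_re_sq {H : Type*} [NormedAddCommGroup H] [InnerProductSpace ℂ H] [CompleteSpace H]
    (A : H →L[ℂ] H) (K : Set H) (hK : K.Nonempty) (hK1 : ∀ k ∈ K, ‖k‖ = 1) :
    (berNorm K ((2 : ℂ)⁻¹ • (A + adjoint A))) ^ 2
      ≤ berNum K ((2 : ℂ)⁻¹ • (adjoint A * A + A * adjoint A)) :=
  berNorm_re_sq_general A K hK1
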